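/- Let Y and Z be reflexive real Banach spaces, let A : Y → 2^{Y*} and B : Z → 2^{Z*} be maximally monotone, let L : Y → Z be bounded linear, let s* ∈ Y*, and let r ∈ Z. Set X = Y × Z × Z* (so X* = Y* × Z* × Z) and define M : X → 2^{X*} by M(x,y,v*) = (−s* + Ax + L*v*) × (By − v*) × {r − Lx + y}. Then M is maximally monotone. -/

import Mathlib

/-!
Monotonicity of `M` is a computation: the coupling terms `±⟨L(x - x'), v* - v'*⟩` and
`±⟨y - y', v* - v'*⟩` cancel. For maximality, let `((x, y, v*), (u*, w*, z))` be monotonically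
related to the graph of `M`. Its pairing with the graph point built from `a' ∈ Ax'`, `b' ∈ By'`
and an arbitrary `v'*` is
`⟨x - x', u* + s* - L*v* - a'⟩ + ⟨y - y', w* + v* - b'⟩ + ⟨z - (r - Lx + y), v* - v'*⟩`.
As `v'*` is free and the graphs of `A` and `B` are nonempty, the last term forces
`z = r - Lx + y`. What is left says that `((x, y), (u* + s* - L*v*, w* + v*))` is monotonically
related to the graph of `A × B`, which is maximally monotone as a product of maximally
monotone operators.
-/

open NormedSpace

/-- Monotonicity of an operator from `Y × Z × Z*` to subsets of `Y* × Z* × Z`,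
with the product duality pairing. -/
def PairMono {Y Z : Type*} [NormedAddCommGroup Y] [NormedSpace ℝ Y]
    [NormedAddCommGroup Z] [NormedSpace ℝ Z]
    (M : Y × Z × StrongDual ℝ Z → Set (StrongDual ℝ Y × StrongDual ℝ Z × Z)) : Prop :=
  ∀ p q u w, u ∈ M p → w ∈ M q →
    (0:ℝ) ≤ (u.1 - w.1) (p.1 - q.1) + (u.2.1 - w.2.1) (p.2.1 - q.2.1)
      + (p.2.2 - q.2.2) (u.2.2 - w.2.2)

/-- Maximal monotonicity in the above sense. -/
def PairMaxMono {Y Z : Type*} [NormedAddCommGroup Y] [NormedSpace ℝ Y]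
    [NormedAddCommGroup Z] [NormedSpace ℝ Z]
    (M : Y × Z × StrongDual ℝ Z → Set (StrongDual ℝ Y × StrongDual ℝ Z × Z)) : Prop :=
  PairMono M ∧ ∀ M', PairMono M' → (∀ p, M p ⊆ M' p) → ∀ p, M' p ⊆ M p

/-- The operator `M(x,y,v*) = (−s* + Ax + L*v*) × (By − v*) × {r − Lx + y}`. -/
def tripleM {Y Z : Type*} [NormedAddCommGroup Y] [NormedSpace ℝ Y]
    [NormedAddCommGroup Z] [NormedSpace ℝ Z]
    (A : Y → Set (StrongDual ℝ Y)) (B : Z → Set (StrongDual ℝ Z)) (L : Y →L[ℝ] Z)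
    (sstar : StrongDual ℝ Y) (r : Z) :
    Y × Z × StrongDual ℝ Z → Set (StrongDual ℝ Y × StrongDual ℝ Z × Z) :=
  fun p => {q | (∃ u ∈ A p.1, q.1 = -sstar + u + p.2.2.comp L) ∧
    (∃ w ∈ B p.2.1, q.2.1 = w - p.2.2) ∧ q.2.2 = r - L p.1 + p.2.1}

section MonotoneOperator

variable {E F : Type*} [AddCommGroup E] [TopologicalSpace E] [Module ℝ E]
  [AddCommGroup F] [TopologicalSpace F] [Module ℝ F]

def IsMonotoneOperator (T : E → Set (StrongDual ℝ E)) : Prop :=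
  ∀ x y u v, u ∈ T x → v ∈ T y → (0:ℝ) ≤ (u - v) (x - y)

def IsMaximalMonotone (T : E → Set (StrongDual ℝ E)) : Prop :=
  IsMonotoneOperator T ∧
    ∀ T', IsMonotoneOperator T' → (∀ x, T x ⊆ T' x) → ∀ x, T' x ⊆ T x

namespace IsMaximalMonotone

variable {T : E → Set (StrongDual ℝ E)}

theorem mem_of_forall_nonneg (hT : IsMaximalMonotone T) {x : E} {u : StrongDual ℝ E}
    (h : ∀ x' u', u' ∈ T x' → (0:ℝ) ≤ (u - u') (x - x')) : u ∈ T x := by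
  let T' : E → Set (StrongDual ℝ E) := fun x' => T x' ∪ {u' | x' = x ∧ u' = u}
  have hT' : IsMonotoneOperator T' := by
    rintro x₁ x₂ u₁ u₂ (hu₁ | ⟨rfl, rfl⟩) (hu₂ | ⟨rfl, rfl⟩)
    · exact hT.1 x₁ x₂ u₁ u₂ hu₁ hu₂
    · have := h x₁ u₁ hu₁
      simp only [sub_apply, map_sub] at this ⊢
      linarith
    · exact h x₂ u₂ hu₂
    · simp
  exact hT.2 T' hT' (fun _ => Set.subset_union_left) x (Or.inr ⟨rfl, rfl⟩)

theorem exists_mem (hT : IsMaximalMonotone T) : ∃ x u, u ∈ T x := by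
  by_contra! h
  exact h 0 0 (hT.mem_of_forall_nonneg fun x' u' hu' => (h x' u' hu').elim)

/-- The maximality of the product operator `A × B`. -/
theorem mem_and_mem_of_forall_nonneg {A : E → Set (StrongDual ℝ E)}
    {B : F → Set (StrongDual ℝ F)} (hA : IsMaximalMonotone A) (hB : IsMaximalMonotone B)
    {x : E} {a : StrongDual ℝ E} {y : F} {b : StrongDual ℝ F}
    (h : ∀ x' a', a' ∈ A x' → ∀ y' b', b' ∈ B y' →
      (0:ℝ) ≤ (a - a') (x - x') + (b - b') (y - y')) :
    a ∈ A x ∧ b ∈ B y := by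
  have hAx : a ∈ A x := by
    refine hA.mem_of_forall_nonneg fun x' a' ha' => ?_
    by_contra! hneg
    -- a negative `A`-term would make `(y, b)` related to the graph of `B` with room to spare
    have hBy : b ∈ B y := hB.mem_of_forall_nonneg fun y' b' hb' => by
      linarith [h x' a' ha' y' b' hb']
    have := h x' a' ha' y b hBy
    simp only [sub_self, zero_apply, add_zero] at this
    linarith
  refine ⟨hAx, hB.mem_of_forall_nonneg fun y' b' hb' => ?_⟩
  simpa using h x a hAx y' b' hb'

end IsMaximalMonotone

end MonotoneOperator

theorem eq_zero_of_forall_dual_add_nonneg {V : Type*} [AddCommGroup V] [TopologicalSpace V]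
    [Module ℝ V] [SeparatingDual ℝ V] {z : V} (c : ℝ)
    (h : ∀ φ : StrongDual ℝ V, 0 ≤ c + φ z) : z = 0 := by
  refine SeparatingDual.eq_zero_of_forall_dual_eq_zero (R := ℝ) fun φ => ?_
  by_contra hφ
  have := h ((-(c + 1) / φ z) • φ)
  rw [smul_apply, smul_eq_mul, div_mul_cancel₀ _ hφ] at this
  linarith

section tripleM

variable {Y Z : Type*} [NormedAddCommGroup Y] [NormedSpace ℝ Y]
  [NormedAddCommGroup Z] [NormedSpace ℝ Z]
  (A : Y → Set (StrongDual ℝ Y)) (B : Z → Set (StrongDual ℝ Z)) (L : Y →L[ℝ] Z)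
  (sstar : StrongDual ℝ Y) (r : Z)

theorem pairing_tripleM_eq (x x' : Y) (y y' : Z) (v v' : StrongDual ℝ Z)
    (u a' : StrongDual ℝ Y) (w b' : StrongDual ℝ Z) (z : Z) :
    (u - (-sstar + a' + v'.comp L)) (x - x') + (w - (b' - v')) (y - y')
        + (v - v') (z - (r - L x' + y'))
      = (u + sstar - v.comp L - a') (x - x') + (w + v - b') (y - y')
        + (v - v') (z - (r - L x + y)) := by
  simp only [sub_apply, add_apply, neg_apply, ContinuousLinearMap.coe_comp,
    Function.comp_apply, map_sub, map_add]
  ring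

theorem pairMono_tripleM (hA : IsMonotoneOperator A) (hB : IsMonotoneOperator B) :
    PairMono (tripleM A B L sstar r) := by
  rintro ⟨x, y, v⟩ ⟨x', y', v'⟩ ⟨_, _, _⟩ ⟨_, _, _⟩ ⟨⟨a, ha, rfl⟩, ⟨b, hb, rfl⟩, rfl⟩
    ⟨⟨a', ha', rfl⟩, ⟨b', hb', rfl⟩, rfl⟩
  rw [pairing_tripleM_eq]
  have hA' := hA x x' a a' ha ha'
  have hB' := hB y y' b b' hb hb'
  simp only [sub_apply, add_apply, neg_apply, map_sub] at hA' hB' ⊢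
  linarith

theorem mem_tripleM_of_forall_nonneg (hA : IsMaximalMonotone A) (hB : IsMaximalMonotone B)
    {x : Y} {y : Z} {v : StrongDual ℝ Z} {u : StrongDual ℝ Y} {w : StrongDual ℝ Z} {z : Z}
    (h : ∀ p' q', q' ∈ tripleM A B L sstar r p' →
      (0:ℝ) ≤ (u - q'.1) (x - p'.1) + (w - q'.2.1) (y - p'.2.1) + (v - p'.2.2) (z - q'.2.2)) :
    (u, w, z) ∈ tripleM A B L sstar r (x, y, v) := by
  have key : ∀ x' a', a' ∈ A x' → ∀ y' b', b' ∈ B y' → ∀ v',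
      (0:ℝ) ≤ (u + sstar - v.comp L - a') (x - x') + (w + v - b') (y - y')
        + (v - v') (z - (r - L x + y)) := by
    intro x' a' ha' y' b' hb' v'
    rw [← pairing_tripleM_eq]
    exact h (x', y', v') (-sstar + a' + v'.comp L, b' - v', r - L x' + y')
      ⟨⟨a', ha', rfl⟩, ⟨b', hb', rfl⟩, rfl⟩
  obtain ⟨x₀, a₀, ha₀⟩ := hA.exists_mem
  obtain ⟨y₀, b₀, hb₀⟩ := hB.exists_mem
  have hz : z = r - L x + y := by
    refine sub_eq_zero.1 (eq_zero_of_forall_dual_add_nonneg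
      ((u + sstar - v.comp L - a₀) (x - x₀) + (w + v - b₀) (y - y₀)) fun φ => ?_)
    simpa only [sub_sub_cancel] using key x₀ a₀ ha₀ y₀ b₀ hb₀ (v - φ)
  have hAB := hA.mem_and_mem_of_forall_nonneg hB (a := u + sstar - v.comp L) (b := w + v)
    fun x' a' ha' y' b' hb' => by
      simpa only [sub_self, zero_apply, add_zero] using key x' a' ha' y' b' hb' v
  exact ⟨⟨_, hAB.1, by abel⟩, ⟨_, hAB.2, by abel⟩, hz⟩

end tripleM

theorem stmt_7_general
    {Y Z : Type*} [NormedAddCommGroup Y] [NormedSpace ℝ Y]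
    [NormedAddCommGroup Z] [NormedSpace ℝ Z]
    (A : Y → Set (StrongDual ℝ Y)) (B : Z → Set (StrongDual ℝ Z))
    (hAmono : ∀ x y u v, u ∈ A x → v ∈ A y → (0:ℝ) ≤ (u - v) (x - y))
    (hAmax : ∀ A' : Y → Set (StrongDual ℝ Y),
      (∀ x y u v, u ∈ A' x → v ∈ A' y → (0:ℝ) ≤ (u - v) (x - y)) →
      (∀ x, A x ⊆ A' x) → ∀ x, A' x ⊆ A x)
    (hBmono : ∀ x y u v, u ∈ B x → v ∈ B y → (0:ℝ) ≤ (u - v) (x - y))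
    (hBmax : ∀ B' : Z → Set (StrongDual ℝ Z),
      (∀ x y u v, u ∈ B' x → v ∈ B' y → (0:ℝ) ≤ (u - v) (x - y)) →
      (∀ x, B x ⊆ B' x) → ∀ x, B' x ⊆ B x)
    (L : Y →L[ℝ] Z) (sstar : StrongDual ℝ Y) (r : Z) :
    PairMaxMono (tripleM A B L sstar r) := by
  refine ⟨pairMono_tripleM A B L sstar r hAmono hBmono, ?_⟩
  rintro M' hM' hsub ⟨x, y, v⟩ ⟨u, w, z⟩ hq
  exact mem_tripleM_of_forall_nonneg A B L sstar r ⟨hAmono, hAmax⟩ ⟨hBmono, hBmax⟩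
    fun p' q' hq' => hM' _ p' _ q' hq (hsub p' hq')

/-- Lemma 2.2(ii): the operator `M` is maximally monotone. -/
theorem stmt_7
    {Y Z : Type*} [NormedAddCommGroup Y] [NormedSpace ℝ Y] [CompleteSpace Y]
    [NormedAddCommGroup Z] [NormedSpace ℝ Z] [CompleteSpace Z]
    (hYrefl : Function.Surjective ⇑(inclusionInDoubleDual ℝ Y))
    (hZrefl : Function.Surjective ⇑(inclusionInDoubleDual ℝ Z))
    (A : Y → Set (StrongDual ℝ Y)) (B : Z → Set (StrongDual ℝ Z))
    (hAmono : ∀ x y u v, u ∈ A x → v ∈ A y → (0:ℝ) ≤ (u - v) (x - y))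
    (hAmax : ∀ A' : Y → Set (StrongDual ℝ Y),
      (∀ x y u v, u ∈ A' x → v ∈ A' y → (0:ℝ) ≤ (u - v) (x - y)) →
      (∀ x, A x ⊆ A' x) → ∀ x, A' x ⊆ A x)
    (hBmono : ∀ x y u v, u ∈ B x → v ∈ B y → (0:ℝ) ≤ (u - v) (x - y))
    (hBmax : ∀ B' : Z → Set (StrongDual ℝ Z),
      (∀ x y u v, u ∈ B' x → v ∈ B' y → (0:ℝ) ≤ (u - v) (x - y)) →
      (∀ x, B x ⊆ B' x) → ∀ x, B' x ⊆ B x)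
    (L : Y →L[ℝ] Z) (sstar : StrongDual ℝ Y) (r : Z) :
    PairMaxMono (tripleM A B L sstar r) :=
  stmt_7_general A B hAmono hAmax hBmono hBmax L sstar r
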